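/- Second-order interpolation on the reference triangle reproduces quadratic polynomials exactly: for every real polynomial p(ξ,η) in two variables of total degree at most 2 and all real ξ, η, one has p(ξ,η) = Σᵢ₌₁⁶ Lᵢ(ξ,η)·p(nᵢ). -/

import Mathlib

/-! Both sides are linear in `p`, so it suffices to check the identity on the six monomials
`1, ξ, η, ξ², ξη, η²` of degree at most two, where it is a polynomial identity in `ξ, η`. -/

noncomputable def L : Fin 6 → ℝ → ℝ → ℝ :=
  ![fun ξ η => 2*(1-ξ-η)*(1/2-ξ-η),
    fun ξ _ => 2*ξ*(ξ-1/2),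
    fun _ η => 2*η*(η-1/2),
    fun ξ η => 4*ξ*(1-ξ-η),
    fun ξ η => 4*ξ*η,
    fun ξ η => 4*η*(1-ξ-η)]

noncomputable def node : Fin 6 → Fin 2 → ℝ :=
  ![![0, 0], ![1, 0], ![0, 1], ![1/2, 0], ![1/2, 1/2], ![0, 1/2]]

open MvPolynomial

lemma sum_L_mul_node_pow {a b : ℕ} (hab : a + b ≤ 2) (ξ η : ℝ) :
    ∑ i, L i ξ η * (node i 0 ^ a * node i 1 ^ b) = ξ ^ a * η ^ b := by
  obtain ⟨ha, hb⟩ : a ≤ 2 ∧ b ≤ 2 := by omega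
  interval_cases a <;> interval_cases b <;> try omega
  all_goals simp [Fin.sum_univ_six, L, node]; ring

lemma sum_L_mul_eval_monomial {d : Fin 2 →₀ ℕ} (hd : d 0 + d 1 ≤ 2) (c ξ η : ℝ) :
    ∑ i, L i ξ η * eval (node i) (monomial d c) = eval ![ξ, η] (monomial d c) := by
  simp only [eval_monomial, Finsupp.prod_fintype _ _ (fun _ => pow_zero _), Fin.prod_univ_two]
  simp [mul_left_comm _ c, ← Finset.mul_sum, sum_L_mul_node_pow hd]

lemma add_le_totalDegree_of_mem_support {R : Type*} [CommSemiring R] {p : MvPolynomial (Fin 2) R}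
    {d : Fin 2 →₀ ℕ} (hd : d ∈ p.support) :
    d 0 + d 1 ≤ p.totalDegree := by
  simpa [Finsupp.sum_fintype, Fin.sum_univ_two] using le_totalDegree hd

/-- Second-order interpolation on the reference triangle reproduces quadratic
polynomials exactly. -/
theorem interpolation_reproduces_quadratics (p : MvPolynomial (Fin 2) ℝ)
    (hdeg : p.totalDegree ≤ 2) (ξ η : ℝ) :
    MvPolynomial.eval ![ξ, η] p
      = ∑ i : Fin 6, L i ξ η * MvPolynomial.eval (node i) p := by
  rw [p.as_sum]
  simp only [map_sum, Finset.mul_sum]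
  rw [Finset.sum_comm]
  refine Finset.sum_congr rfl fun d hd => ?_
  exact (sum_L_mul_eval_monomial ((add_le_totalDegree_of_mem_support hd).trans hdeg) _ ξ η).symm
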